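/- arXiv:0812.3933 — 2 statements merged into one kernel-verified Lean document; each statement's English description precedes it below -/
import Mathlib

section
/- Let π = [π_0, π_1, …, π_{n+1}] be a permutation that is not the identity. Then there exists a forward-march operation o, which is either an FM prefix reversal or an FM prefix transposition, such that b′(π·o) ≤ b′(π) − 1, i.e., applying o removes at least one redefined breakpoint. -/
/-- A permutation on `n` elements: a list `[π₀, π₁, …, π_{n+1}]` of distinct
naturals that is a rearrangement of `0, 1, …, n+1` with `π₀ = 0` and
`π_{n+1} = n+1`. -/
def IsPerm (n : ℕ) (π : List ℕ) : Prop :=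
  π.Perm (List.range (n + 2)) ∧ π.getD 0 0 = 0 ∧ π.getD (n + 1) 0 = n + 1

/-- Breakpoint count `b(π)`: `1` plus the number of indices `i` with
`2 ≤ i ≤ n+1` and `|π_i − π_{i−1}| ≠ 1` (these are exactly the consecutive
pairs of the tail `π₁, …, π_{n+1}`). -/
def bp (π : List ℕ) : ℕ :=
  1 + ((π.drop 1).zip (π.drop 2)).countP
        (fun p => !(p.1 + 1 == p.2 || p.2 + 1 == p.1))

/-- Redefined breakpoint count `b′(π)`: the number of indices `i` with
`1 ≤ i ≤ n+1` and `|π_i − π_{i−1}| ≠ 1`. -/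
def bp' (π : List ℕ) : ℕ :=
  (π.zip (π.drop 1)).countP
    (fun p => !(p.1 + 1 == p.2 || p.2 + 1 == p.1))

/-- Prefix reversal `β(1,j)`: `[π₀, π_{j−1}, …, π₁, π_j, …, π_{n+1}]`. -/
def prefixReversal (π : List ℕ) (j : ℕ) : List ℕ :=
  π.take 1 ++ ((π.drop 1).take (j - 1)).reverse ++ π.drop j

/-- Prefix transposition `τ(1,j,k)`:
`[π₀, π_j, …, π_{k−1}, π₁, …, π_{j−1}, π_k, …, π_{n+1}]`. -/
def prefixTransposition (π : List ℕ) (j k : ℕ) : List ℕ :=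
  π.take 1 ++ (π.drop j).take (k - j) ++ (π.drop 1).take (j - 1) ++ π.drop k

/-- Prefix transreversal `βτ(1,j,k)`:
`[π₀, π_j, …, π_{k−1}, π_{j−1}, …, π₁, π_k, …, π_{n+1}]`. -/
def prefixTransreversal (π : List ℕ) (j k : ℕ) : List ℕ :=
  π.take 1 ++ (π.drop j).take (k - j) ++ ((π.drop 1).take (j - 1)).reverse ++ π.drop k

/-- A prefix operation: a prefix reversal, a prefix transposition, or a
prefix transreversal. -/
inductive PrefOp
  | rev (j : ℕ)
  | trans (j k : ℕ)
  | transrev (j k : ℕ)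

/-- Apply a prefix operation to a permutation. -/
def PrefOp.apply (π : List ℕ) : PrefOp → List ℕ
  | .rev j => prefixReversal π j
  | .trans j k => prefixTransposition π j k
  | .transrev j k => prefixTransreversal π j k

/-- Validity of a prefix operation on a permutation of `n` elements:
`3 ≤ j ≤ n+1` for a prefix reversal, `2 ≤ j < k ≤ n+1` for a prefix
transposition or a prefix transreversal. -/
def PrefOp.Valid (n : ℕ) : PrefOp → Prop
  | .rev j => 3 ≤ j ∧ j ≤ n + 1
  | .trans j k => 2 ≤ j ∧ j < k ∧ k ≤ n + 1
  | .transrev j k => 2 ≤ j ∧ j < k ∧ k ≤ n + 1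

/-- Is the operation a prefix reversal? -/
def PrefOp.isRev : PrefOp → Bool
  | .rev _ => true
  | _ => false

/-- Is the operation a prefix transreversal? -/
def PrefOp.isTransrev : PrefOp → Bool
  | .transrev _ _ => true
  | _ => false

/-- Apply a sequence of prefix operations, left to right. -/
def applySeq : List ℕ → List PrefOp → List ℕ
  | π, [] => π
  | π, o :: os => applySeq (o.apply π) os

/-- All operations in the sequence are valid for permutations of `n` elements. -/
def ValidSeq (n : ℕ) (ops : List PrefOp) : Prop :=
  ∀ o ∈ ops, o.Valid n

/-- `fm π` is `m(π) + 1`, where `m(π)` is the largest index `m` such that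
`π_i = i` for all `0 ≤ i ≤ m`; i.e. the length of the longest already-sorted
prefix of `π`. -/
def fm (π : List ℕ) : ℕ :=
  ((List.range π.length).takeWhile (fun i => π.getD i 0 == i)).length

/-- Forward-march prefix reversal: reverses the segment
`π_{m(π)+1}, …, π_{j−1}` in place. -/
def fmPrefixReversal (π : List ℕ) (j : ℕ) : List ℕ :=
  π.take (fm π) ++ ((π.drop (fm π)).take (j - fm π)).reverse ++ π.drop j

/-- Forward-march prefix transposition: cuts the segment
`π_{m(π)+1}, …, π_{j−1}` and pastes it between `π_{k−1}` and `π_k`. -/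
def fmPrefixTransposition (π : List ℕ) (j k : ℕ) : List ℕ :=
  π.take (fm π) ++ (π.drop j).take (k - j) ++
    (π.drop (fm π)).take (j - fm π) ++ π.drop k

/-- A forward-march operation: an FM prefix reversal or an FM prefix
transposition. -/
inductive FMOp
  | rev (j : ℕ)
  | trans (j k : ℕ)

/-- Apply a forward-march operation. -/
def FMOp.apply (π : List ℕ) : FMOp → List ℕ
  | .rev j => fmPrefixReversal π j
  | .trans j k => fmPrefixTransposition π j k

/-- Validity of a forward-march operation on a permutation `π` of `n`
elements: `m(π)+3 ≤ j ≤ n+1` for an FM prefix reversal, and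
`m(π)+2 ≤ j ≤ n`, `j < k ≤ n+1` for an FM prefix transposition
(recall `fm π = m(π) + 1`). -/
def FMOp.Valid (n : ℕ) (π : List ℕ) : FMOp → Prop
  | .rev j => fm π + 2 ≤ j ∧ j ≤ n + 1
  | .trans j k => fm π + 1 ≤ j ∧ j ≤ n ∧ j < k ∧ k ≤ n + 1

/-- Is the forward-march operation an FM prefix reversal? -/
def FMOp.isRev : FMOp → Bool
  | .rev _ => true
  | _ => false

/-- Apply a sequence of forward-march operations, left to right. -/
def applyFMSeq : List ℕ → List FMOp → List ℕ
  | π, [] => π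
  | π, o :: os => applyFMSeq (o.apply π) os

/-- Validity of a sequence of forward-march operations, where each operation
must be valid for the permutation obtained after applying the previous ones. -/
def FMValidSeq (n : ℕ) : List ℕ → List FMOp → Prop
  | _, [] => True
  | π, o :: os => o.Valid n π ∧ FMValidSeq n (o.apply π) os

/-!
Let `m = m(π)`. Then `π = [0, …, m] ++ S ++ [m+1, …, m+k+1] ++ U` with `S` and `U` nonempty,
where the middle block is the maximal run of consecutive values starting at `m+1`, and every
value in `S` and `U` exceeds `m+k+1`. Hence the junctions `m | S` and `run | U` are breakpoints,
and so is `S | run` when `k ≥ 1`. If `k = 0`, reversing `S ++ [m+1]` removes the two breakpoints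
at its ends and creates at most one; if `k ≥ 1`, moving `S` behind the run removes three and
creates at most two. Either way `m+1` lands next to `m`.
-/

def breakpoint (a b : ℕ) : ℕ := if a + 1 = b ∨ b + 1 = a then 0 else 1

lemma breakpoint_comm (a b : ℕ) : breakpoint a b = breakpoint b a := by
  simp only [breakpoint, or_comm]

lemma breakpoint_le_one (a b : ℕ) : breakpoint a b ≤ 1 := by
  unfold breakpoint; split <;> omega

lemma breakpoint_self_succ (a : ℕ) : breakpoint a (a + 1) = 0 :=
  if_pos (Or.inl rfl)

lemma breakpoint_of_add_two_le {a b : ℕ} (h : a + 2 ≤ b) : breakpoint a b = 1 :=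
  if_neg (by omega)

lemma bp'_singleton (a : ℕ) : bp' [a] = 0 := rfl

lemma bp'_cons_cons (a b : ℕ) (l : List ℕ) :
    bp' (a :: b :: l) = breakpoint a b + bp' (b :: l) := by
  rw [bp', List.drop_one, List.tail_cons, List.zip_cons_cons, List.countP_cons, add_comm]
  congr 1
  unfold breakpoint; grind

lemma bp'_append {A B : List ℕ} (hA : A ≠ []) (hB : B ≠ []) :
    bp' (A ++ B) = bp' A + breakpoint (A.getLast hA) (B.head hB) + bp' B := by
  induction A with
  | nil => exact absurd rfl hA
  | cons a A ih =>
    obtain ⟨b, B, rfl⟩ := List.exists_cons_of_ne_nil hB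
    cases A with
    | nil =>
      rw [List.singleton_append, bp'_cons_cons, bp'_singleton, zero_add]
      rfl
    | cons c A =>
      rw [List.cons_append, List.cons_append, bp'_cons_cons, ← List.cons_append,
        ih (List.cons_ne_nil _ _), bp'_cons_cons, List.getLast_cons (List.cons_ne_nil _ _)]
      omega

lemma bp'_reverse (l : List ℕ) : bp' l.reverse = bp' l := by
  induction l with
  | nil => rfl
  | cons a l ih =>
    cases l with
    | nil => rfl
    | cons b l =>
      rw [List.reverse_cons, bp'_append (by simp) (List.cons_ne_nil _ _), ih, bp'_cons_cons,
        List.getLast_reverse, List.head_cons, List.head_cons, bp'_singleton, breakpoint_comm]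
      omega

lemma bp'_append_append {A B C : List ℕ} (hA : A ≠ []) (hB : B ≠ []) (hC : C ≠ []) :
    bp' (A ++ B ++ C) = bp' A + breakpoint (A.getLast hA) (B.head hB) + bp' B +
      breakpoint (B.getLast hB) (C.head hC) + bp' C := by
  rw [bp'_append (List.append_ne_nil_of_left_ne_nil hA B) hC, bp'_append hA hB,
    List.getLast_append_of_ne_nil _ hB]

lemma fm_eq_findIdx (π : List ℕ) :
    fm π = (List.range π.length).findIdx (fun i => !(π.getD i 0 == i)) := by
  rw [fm, List.takeWhile_eq_take_findIdx_not, List.length_take,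
    Nat.min_eq_left List.findIdx_le_length]

lemma getD_of_lt_fm {π : List ℕ} {i : ℕ} (h : i < fm π) : π.getD i 0 = i := by
  rw [fm_eq_findIdx] at h
  simpa using List.not_of_lt_findIdx h

lemma getD_fm_ne {π : List ℕ} (h : fm π < π.length) : π.getD (fm π) 0 ≠ fm π := by
  rw [fm_eq_findIdx] at h ⊢
  simpa using List.findIdx_getElem (w := h.trans_eq List.length_range.symm)

lemma fmPrefixReversal_append {P X T : List ℕ} (h : fm (P ++ X ++ T) = P.length) :
    fmPrefixReversal (P ++ X ++ T) (P.length + X.length) = P ++ X.reverse ++ T := by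
  rw [fmPrefixReversal, h]
  simp [List.drop_append]

lemma fmPrefixTransposition_append {P S M T : List ℕ}
    (h : fm (P ++ S ++ M ++ T) = P.length) :
    fmPrefixTransposition (P ++ S ++ M ++ T) (P.length + S.length)
      (P.length + S.length + M.length) = P ++ M ++ S ++ T := by
  rw [fmPrefixTransposition, h, Nat.add_sub_cancel_left]
  simp [List.drop_append, List.drop_of_length_le, Nat.add_assoc]

lemma IsPerm.length_eq {n : ℕ} {π : List ℕ} (hπ : IsPerm n π) : π.length = n + 2 := by
  simpa using hπ.1.length_eq

lemma IsPerm.getLast_eq {n : ℕ} {π : List ℕ} (hπ : IsPerm n π) (h : π ≠ []) :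
    π.getLast h = n + 1 := by
  have hlen := hπ.length_eq
  rw [List.getLast_eq_getElem, ← hπ.2.2, List.getD_eq_getElem _ _ (by omega)]
  congr 1
  omega

lemma exists_maximal_range'_prefix (a : ℕ) (L : List ℕ) :
    ∃ k U, a :: L = List.range' a (k + 1) ++ U ∧ U.head? ≠ some (a + k + 1) := by
  induction L generalizing a with
  | nil => exact ⟨0, [], rfl, by simp⟩
  | cons b L ih =>
    by_cases hb : b = a + 1
    · subst hb
      obtain ⟨k, U, hL, hU⟩ := ih (a + 1)
      refine ⟨k + 1, U, ?_, by rwa [show a + (k + 1) + 1 = a + 1 + k + 1 by omega]⟩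
      rw [List.range'_succ (s := a), List.cons_append, hL]
    · exact ⟨0, b :: L, rfl, by simpa using hb⟩

lemma IsPerm.exists_eq_range_append_cons {n : ℕ} {π : List ℕ} (hπ : IsPerm n π)
    (hid : π ≠ List.range (n + 2)) :
    ∃ m S T, fm π = m + 1 ∧ π = List.range (m + 1) ++ S ++ (m + 1) :: T ∧ S ≠ [] := by
  have hlen := hπ.length_eq
  obtain ⟨hperm, h0, -⟩ := hπ
  have hfm : fm π < π.length := by
    by_contra! h
    refine hid (List.ext_getElem (by simp [hlen]) fun i hi _ => ?_)
    have := getD_of_lt_fm (hi.trans_le h)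
    rwa [List.getElem_range, ← List.getD_eq_getElem _ 0 hi]
  have htake : π.take (fm π) = List.range (fm π) := by
    refine List.ext_getElem (by simp only [List.length_take, List.length_range]; omega)
      fun i hi _ => ?_
    have hi' : i < fm π := by simp only [List.length_take] at hi; omega
    rw [List.getElem_take, List.getElem_range, ← List.getD_eq_getElem _ 0]
    exact getD_of_lt_fm hi'
  have hne := getD_fm_ne hfm
  generalize fm π = f at hfm htake hne ⊢
  have hsplit : π = List.range f ++ π.drop f := htake ▸ (List.take_append_drop _ _).symm
  obtain ⟨m, rfl⟩ : ∃ m, f = m + 1 := Nat.exists_eq_succ_of_ne_zero fun h => hne (h ▸ h0)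
  have hmem : m + 1 ∈ π.drop (m + 1) := by
    have : m + 1 ∈ π := hperm.mem_iff.mpr (List.mem_range.mpr (by omega))
    rw [hsplit, List.mem_append] at this
    simpa using this
  obtain ⟨S, T, hST⟩ := List.append_of_mem hmem
  refine ⟨m, S, T, rfl, ?_, ?_⟩
  · rw [hsplit, hST, List.append_assoc]
  · rintro rfl
    refine hne ?_
    rw [hsplit, hST]
    simp

lemma IsPerm.exists_run_decomposition {n : ℕ} {π : List ℕ} (hπ : IsPerm n π)
    (hid : π ≠ List.range (n + 2)) :
    ∃ m k S U, fm π = m + 1 ∧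
      π = List.range (m + 1) ++ S ++ List.range' (m + 1) (k + 1) ++ U ∧ S ≠ [] ∧ U ≠ [] ∧
      (∀ a ∈ S ++ U, m + k + 2 ≤ a) ∧ U.head? ≠ some (m + k + 2) := by
  obtain ⟨m, S, T, hfm, hπS, hS⟩ := hπ.exists_eq_range_append_cons hid
  obtain ⟨k, U, hTU, hU₀⟩ := exists_maximal_range'_prefix (m + 1) T
  rw [hTU, ← List.append_assoc] at hπS
  have hbound : ∀ a ∈ S ++ U, m + k + 2 ≤ a := by
    have hrange : List.range (m + k + 2) = List.range (m + 1) ++ List.range' (m + 1) (k + 1) := by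
      rw [show m + k + 2 = m + 1 + (k + 1) by omega, List.range_add, List.range'_eq_map_range]
    have hperm : π.Perm (List.range (m + k + 2) ++ (S ++ U)) := by
      rw [hπS, hrange]
      simpa only [List.append_assoc] using (List.perm_append_comm_assoc S _ U).append_left _
    have hnd := hperm.nodup_iff.mp (hπ.1.nodup_iff.mpr List.nodup_range)
    intro a ha
    by_contra! h
    exact (List.nodup_append.mp hnd).2.2 a (List.mem_range.mpr h) a ha rfl
  refine ⟨m, k, S, U, hfm, hπS, hS, ?_, hbound,
    by rwa [show m + k + 2 = m + 1 + k + 1 by omega]⟩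
  -- If `U = []`, then `π` ends with `m + k + 1 = n + 1`, so the values of `S` would exceed `n + 1`.
  rintro rfl
  have hlast := hπ.getLast_eq (by simp [hπS])
  simp only [hπS, List.append_nil, List.getLast_range',
    List.getLast_append_of_ne_nil _ (by simp : List.range' (m + 1) (k + 1) ≠ [])] at hlast
  have hx : S.head hS < n + 2 := List.mem_range.mp (hπ.1.subset (by simp [hπS, List.head_mem]))
  have := hbound _ (List.mem_append_left _ (S.head_mem hS))
  omega

theorem exists_fmOp_bp'_lt_of_short_run {n m : ℕ} {S U : List ℕ}
    (hS : S ≠ []) (hU : U ≠ [])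
    (hlen : (List.range (m + 1) ++ S ++ [m + 1] ++ U).length = n + 2)
    (hfm : fm (List.range (m + 1) ++ S ++ [m + 1] ++ U) = m + 1)
    (hSU : ∀ a ∈ S ++ U, m + 2 ≤ a) (hU₀ : U.head? ≠ some (m + 2)) :
    ∃ o : FMOp, o.Valid n (List.range (m + 1) ++ S ++ [m + 1] ++ U) ∧
      bp' (o.apply (List.range (m + 1) ++ S ++ [m + 1] ++ U)) <
        bp' (List.range (m + 1) ++ S ++ [m + 1] ++ U) := by
  have hP : List.range (m + 1) ≠ [] := by simp
  have hX : S ++ [m + 1] ≠ [] := by simp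
  have hXr : (S ++ [m + 1]).reverse ≠ [] := by simp
  rw [List.append_assoc _ S] at hlen hfm ⊢
  have hS₁ := List.length_pos_of_ne_nil hS
  have hU₁ := List.length_pos_of_ne_nil hU
  simp only [List.length_append, List.length_range, List.length_singleton] at hlen
  refine ⟨.rev ((List.range (m + 1)).length + (S ++ [m + 1]).length), ?_, ?_⟩
  · simp only [FMOp.Valid, hfm, List.length_append, List.length_range, List.length_singleton]
    omega
  rw [FMOp.apply, fmPrefixReversal_append (by simpa using hfm),
    bp'_append_append hP hXr hU, bp'_append_append hP hX hU, bp'_reverse]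
  have hx := hSU _ (List.mem_append_left U (S.head_mem hS))
  have hy := hSU _ (List.mem_append_right S (U.head_mem hU))
  have hy' : U.head hU ≠ m + 2 := fun h => hU₀ (by rw [List.head?_eq_some_head hU, h])
  have e₁ : (S ++ [m + 1]).head hX = S.head hS := List.head_append_of_ne_nil hS
  have e₂ : (S ++ [m + 1]).getLast hX = m + 1 := List.getLast_concat ..
  have e₃ : (S ++ [m + 1]).reverse.head hXr = m + 1 := by simp
  have e₄ : (S ++ [m + 1]).reverse.getLast hXr = S.head hS := by rw [List.getLast_reverse, e₁]
  rw [e₁, e₂, e₃, e₄, List.getLast_range, add_tsub_cancel_right, breakpoint_self_succ,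
    breakpoint_of_add_two_le hx, breakpoint_of_add_two_le (show m + 1 + 2 ≤ U.head hU by omega)]
  have := breakpoint_le_one (S.head hS) (U.head hU)
  omega

theorem exists_fmOp_bp'_lt_of_long_run {n m k : ℕ} {S U : List ℕ}
    (hS : S ≠ []) (hU : U ≠ [])
    (hlen : (List.range (m + 1) ++ S ++ List.range' (m + 1) (k + 2) ++ U).length = n + 2)
    (hfm : fm (List.range (m + 1) ++ S ++ List.range' (m + 1) (k + 2) ++ U) = m + 1)
    (hSU : ∀ a ∈ S ++ U, m + k + 3 ≤ a) (hU₀ : U.head? ≠ some (m + k + 3)) :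
    ∃ o : FMOp, o.Valid n (List.range (m + 1) ++ S ++ List.range' (m + 1) (k + 2) ++ U) ∧
      bp' (o.apply (List.range (m + 1) ++ S ++ List.range' (m + 1) (k + 2) ++ U)) <
        bp' (List.range (m + 1) ++ S ++ List.range' (m + 1) (k + 2) ++ U) := by
  have hP : List.range (m + 1) ≠ [] := by simp
  have hM : List.range' (m + 1) (k + 2) ≠ [] := by simp
  have hS₁ := List.length_pos_of_ne_nil hS
  have hU₁ := List.length_pos_of_ne_nil hU
  simp only [List.length_append, List.length_range, List.length_range'] at hlen
  refine ⟨.trans ((List.range (m + 1)).length + S.length)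
    ((List.range (m + 1)).length + S.length + (List.range' (m + 1) (k + 2)).length), ?_, ?_⟩
  · simp only [FMOp.Valid, hfm, List.length_range, List.length_range']
    omega
  rw [FMOp.apply, fmPrefixTransposition_append (by simpa using hfm),
    bp'_append (List.append_ne_nil_of_left_ne_nil (List.append_ne_nil_of_left_ne_nil hP _) _) hU,
    bp'_append (List.append_ne_nil_of_left_ne_nil (List.append_ne_nil_of_left_ne_nil hP _) _) hU,
    bp'_append_append hP hS hM, bp'_append_append hP hM hS,
    List.getLast_append_of_ne_nil _ hM, List.getLast_append_of_ne_nil _ hS]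
  have hx := hSU _ (List.mem_append_left U (S.head_mem hS))
  have hz := hSU _ (List.mem_append_left U (S.getLast_mem hS))
  have hy := hSU _ (List.mem_append_right S (U.head_mem hU))
  have hy' : U.head hU ≠ m + k + 3 := fun h => hU₀ (by rw [List.head?_eq_some_head hU, h])
  simp only [List.getLast_range, List.getLast_range', List.head_range', add_tsub_cancel_right]
  rw [breakpoint_self_succ, breakpoint_of_add_two_le (show m + 2 ≤ S.head hS by omega),
    breakpoint_comm (S.getLast hS) (m + 1),
    breakpoint_of_add_two_le (show m + 1 + 2 ≤ S.getLast hS by omega),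
    breakpoint_of_add_two_le (show m + 1 + (k + 2) - 1 + 2 ≤ U.head hU by omega)]
  have := breakpoint_le_one (m + 1 + (k + 2) - 1) (S.head hS)
  have := breakpoint_le_one (S.getLast hS) (U.head hU)
  omega

/-- if `π` is not the identity, then some forward-march
operation removes at least one redefined breakpoint. -/
theorem exists_fmOp_removing_bp'
    (n : ℕ) (π : List ℕ) (hπ : IsPerm n π)
    (hid : π ≠ List.range (n + 2)) :
    ∃ o : FMOp, o.Valid n π ∧ bp' (o.apply π) ≤ bp' π - 1 := by
  suffices ∃ o : FMOp, o.Valid n π ∧ bp' (o.apply π) < bp' π by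
    obtain ⟨o, ho, hlt⟩ := this
    exact ⟨o, ho, by omega⟩
  have hlen := hπ.length_eq
  obtain ⟨m, k, S, U, hfm, rfl, hS, hU, hSU, hU₀⟩ := hπ.exists_run_decomposition hid
  rcases k with _ | k
  · exact exists_fmOp_bp'_lt_of_short_run hS hU hlen hfm hSU hU₀
  · exact exists_fmOp_bp'_lt_of_long_run hS hU hlen hfm (fun a ha => by linarith [hSU a ha]) hU₀
end

section
/- (Adaptive lower bound for prefix reversals, prefix transpositions and prefix transreversals) Let π be a permutation and let o_1, …, o_ℓ be a sequence of operations, each a prefix reversal, a prefix transposition, or a prefix transreversal, that transforms π into the identity permutation, and suppose exactly r of the operations o_1, …, o_ℓ are prefix reversals. Then 2ℓ ≥ b(π) − 1 + r, i.e., ℓ ≥ (b(π) − 1 + r)/2. (This yields the adaptive approximation ratios 3 − 3r/(b(π)+r−1) for SortByRT3 and 2 − 2r/(b(π)+r−1) for SortByRT2 when an optimal algorithm applies r prefix reversals.) -/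
/-! Every operation keeps `π₀` in place and rearranges the tail `π₁ … π_{n+1}` by cutting it
into at most three blocks and gluing them back in another order, some possibly reversed. Since
adjacency `|a - b| = 1` is symmetric, breakpoints inside a block survive, so an operation removes
at most one breakpoint per cut: at most two in general, and at most one for a prefix reversal,
which makes a single cut. Summing over the sequence, `b(π) - b(id) ≤ 2 (ℓ - r) + r`. -/

lemma take_append_take_drop_append_drop {α : Type*} (l : List α) {i j : ℕ} (hij : i ≤ j) :
    l.take i ++ (l.drop i).take (j - i) ++ l.drop j = l := by
  conv_rhs => rw [← List.take_append_drop i l, ← List.take_append_drop (j - i) (l.drop i)]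
  rw [List.drop_drop, Nat.add_sub_cancel' hij, List.append_assoc]

section AdjCount

variable {α : Type*} (p : α → α → Bool)

def adjCount (l : List α) : ℕ := (l.zip l.tail).countP fun x => p x.1 x.2

@[simp] lemma adjCount_nil : adjCount p [] = 0 := rfl

@[simp] lemma adjCount_singleton (a : α) : adjCount p [a] = 0 := rfl

lemma adjCount_cons_cons (a b : α) (l : List α) :
    adjCount p (a :: b :: l) = adjCount p (b :: l) + if p a b then 1 else 0 := by
  simp [adjCount, List.countP_cons]

lemma adjCount_le_cons (a : α) (l : List α) : adjCount p l ≤ adjCount p (a :: l) := by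
  cases l with
  | nil => simp
  | cons b l => rw [adjCount_cons_cons]; omega

lemma adjCount_cons_le (a : α) (l : List α) : adjCount p (a :: l) ≤ adjCount p l + 1 := by
  cases l with
  | nil => simp
  | cons b l => rw [adjCount_cons_cons]; split <;> omega

lemma adjCount_add_le_append (l₁ l₂ : List α) :
    adjCount p l₁ + adjCount p l₂ ≤ adjCount p (l₁ ++ l₂) := by
  induction l₁ with
  | nil => simp
  | cons a l₁ ih =>
    cases l₁ with
    | nil => simpa using adjCount_le_cons p a l₂
    | cons b l₁ =>
      simp only [List.cons_append, adjCount_cons_cons] at ih ⊢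
      omega

lemma adjCount_append_le (l₁ l₂ : List α) :
    adjCount p (l₁ ++ l₂) ≤ adjCount p l₁ + adjCount p l₂ + 1 := by
  induction l₁ with
  | nil => simp
  | cons a l₁ ih =>
    cases l₁ with
    | nil => simpa using adjCount_cons_le p a l₂
    | cons b l₁ =>
      simp only [List.cons_append, adjCount_cons_cons] at ih ⊢
      omega

lemma adjCount_append_singleton (l : List α) (a : α) :
    adjCount p (l ++ [a]) = adjCount p l + (l.getLast?.elim 0 fun b => if p b a then 1 else 0) := by
  induction l with
  | nil => rfl
  | cons b l ih =>
    cases l with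
    | nil => simp [adjCount_cons_cons]
    | cons c l =>
      simp only [List.cons_append, adjCount_cons_cons, List.getLast?_cons_cons] at ih ⊢
      omega

lemma adjCount_reverse (hp : ∀ a b, p a b = p b a) (l : List α) :
    adjCount p l.reverse = adjCount p l := by
  induction l with
  | nil => rfl
  | cons a l ih =>
    rw [List.reverse_cons, adjCount_append_singleton, ih, List.getLast?_reverse]
    cases l with
    | nil => rfl
    | cons b l => simp [adjCount_cons_cons, hp]

lemma adjCount_le_reverse_append (hp : ∀ a b, p a b = p b a) (l₁ l₂ : List α) :
    adjCount p (l₁ ++ l₂) ≤ adjCount p (l₁.reverse ++ l₂) + 1 := by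
  have := adjCount_append_le p l₁ l₂
  have := adjCount_add_le_append p l₁.reverse l₂
  rw [adjCount_reverse p hp] at this
  omega

lemma adjCount_append_append_le (l₁ l₂ l₃ : List α) :
    adjCount p (l₁ ++ l₂ ++ l₃) ≤ adjCount p l₁ + adjCount p l₂ + adjCount p l₃ + 2 := by
  have := adjCount_append_le p (l₁ ++ l₂) l₃
  have := adjCount_append_le p l₁ l₂
  omega

lemma adjCount_add_add_le_append_append (l₁ l₂ l₃ : List α) :
    adjCount p l₁ + adjCount p l₂ + adjCount p l₃ ≤ adjCount p (l₁ ++ l₂ ++ l₃) := by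
  have := adjCount_add_le_append p (l₁ ++ l₂) l₃
  have := adjCount_add_le_append p l₁ l₂
  omega

lemma adjCount_le_swap_append (l₁ l₂ l₃ : List α) :
    adjCount p (l₁ ++ l₂ ++ l₃) ≤ adjCount p (l₂ ++ l₁ ++ l₃) + 2 := by
  have := adjCount_append_append_le p l₁ l₂ l₃
  have := adjCount_add_add_le_append_append p l₂ l₁ l₃
  omega

lemma adjCount_le_swap_reverse_append (hp : ∀ a b, p a b = p b a) (l₁ l₂ l₃ : List α) :
    adjCount p (l₁ ++ l₂ ++ l₃) ≤ adjCount p (l₂ ++ l₁.reverse ++ l₃) + 2 := by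
  have := adjCount_append_append_le p l₁ l₂ l₃
  have := adjCount_add_add_le_append_append p l₂ l₁.reverse l₃
  rw [adjCount_reverse p hp] at this
  omega

end AdjCount

def isBreakpoint (a b : ℕ) : Bool := !(a + 1 == b || b + 1 == a)

lemma isBreakpoint_comm (a b : ℕ) : isBreakpoint a b = isBreakpoint b a := by
  simp [isBreakpoint, Bool.or_comm]

lemma bp_cons (a : ℕ) (t : List ℕ) : bp (a :: t) = 1 + adjCount isBreakpoint t := by
  cases t <;> rfl

lemma adjCount_isBreakpoint_range' (s m : ℕ) : adjCount isBreakpoint (List.range' s m) = 0 := by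
  induction m generalizing s with
  | zero => rfl
  | succ m ih =>
    cases m with
    | zero => rfl
    | succ m =>
      rw [List.range'_succ, List.range'_succ, adjCount_cons_cons, ← List.range'_succ, ih]
      simp [isBreakpoint]

lemma bp_range (n : ℕ) : bp (List.range (n + 2)) = 1 := by
  rw [List.range_eq_range', List.range'_succ, bp_cons, adjCount_isBreakpoint_range']

lemma prefixReversal_cons_succ (a : ℕ) (t : List ℕ) (i : ℕ) :
    prefixReversal (a :: t) (i + 1) = a :: ((t.take i).reverse ++ t.drop i) := by
  simp [prefixReversal]

lemma prefixTransposition_cons_succ (a : ℕ) (t : List ℕ) (i k : ℕ) :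
    prefixTransposition (a :: t) (i + 1) (k + 1) =
      a :: ((t.drop i).take (k - i) ++ t.take i ++ t.drop k) := by
  simp [prefixTransposition]

lemma prefixTransreversal_cons_succ (a : ℕ) (t : List ℕ) (i k : ℕ) :
    prefixTransreversal (a :: t) (i + 1) (k + 1) =
      a :: ((t.drop i).take (k - i) ++ (t.take i).reverse ++ t.drop k) := by
  simp [prefixTransreversal]

lemma bp_le_bp_prefixReversal_add_one (π : List ℕ) {j : ℕ} (hj : 1 ≤ j) :
    bp π ≤ bp (prefixReversal π j) + 1 := by
  obtain ⟨i, rfl⟩ : ∃ i, j = i + 1 := ⟨j - 1, by omega⟩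
  rcases π with _ | ⟨a, t⟩
  · simp [prefixReversal]
  · have hcut := adjCount_le_reverse_append isBreakpoint isBreakpoint_comm (t.take i) (t.drop i)
    rw [List.take_append_drop] at hcut
    rw [prefixReversal_cons_succ, bp_cons, bp_cons]
    omega

lemma bp_le_bp_prefixTransposition_add_two (π : List ℕ) {j k : ℕ} (hj : 1 ≤ j) (hjk : j ≤ k) :
    bp π ≤ bp (prefixTransposition π j k) + 2 := by
  obtain ⟨i, rfl⟩ : ∃ i, j = i + 1 := ⟨j - 1, by omega⟩
  obtain ⟨k, rfl⟩ : ∃ k', k = k' + 1 := ⟨k - 1, by omega⟩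
  rcases π with _ | ⟨a, t⟩
  · simp [prefixTransposition]
  · have hcut := adjCount_le_swap_append isBreakpoint
      (t.take i) ((t.drop i).take (k - i)) (t.drop k)
    rw [take_append_take_drop_append_drop t (by omega)] at hcut
    rw [prefixTransposition_cons_succ, bp_cons, bp_cons]
    omega

lemma bp_le_bp_prefixTransreversal_add_two (π : List ℕ) {j k : ℕ} (hj : 1 ≤ j) (hjk : j ≤ k) :
    bp π ≤ bp (prefixTransreversal π j k) + 2 := by
  obtain ⟨i, rfl⟩ : ∃ i, j = i + 1 := ⟨j - 1, by omega⟩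
  obtain ⟨k, rfl⟩ : ∃ k', k = k' + 1 := ⟨k - 1, by omega⟩
  rcases π with _ | ⟨a, t⟩
  · simp [prefixTransreversal]
  · have hcut := adjCount_le_swap_reverse_append isBreakpoint isBreakpoint_comm
      (t.take i) ((t.drop i).take (k - i)) (t.drop k)
    rw [take_append_take_drop_append_drop t (by omega)] at hcut
    rw [prefixTransreversal_cons_succ, bp_cons, bp_cons]
    omega

lemma PrefOp.bp_le_bp_apply_add {n : ℕ} {o : PrefOp} (hv : o.Valid n) (π : List ℕ) :
    bp π ≤ bp (o.apply π) + if o.isRev then 1 else 2 := by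
  cases o with
  | rev j =>
    obtain ⟨hj, -⟩ := hv
    simpa [apply, isRev] using bp_le_bp_prefixReversal_add_one π (j := j) (by omega)
  | trans j k =>
    obtain ⟨hj, hjk, -⟩ := hv
    simpa [apply, isRev] using bp_le_bp_prefixTransposition_add_two π (by omega) hjk.le
  | transrev j k =>
    obtain ⟨hj, hjk, -⟩ := hv
    simpa [apply, isRev] using bp_le_bp_prefixTransreversal_add_two π (by omega) hjk.le

lemma bp_add_countP_isRev_le {n : ℕ} {ops : List PrefOp} (hval : ValidSeq n ops) (π : List ℕ) :
    bp π + ops.countP PrefOp.isRev ≤ bp (applySeq π ops) + 2 * ops.length := by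
  induction ops generalizing π with
  | nil => simp [applySeq]
  | cons o ops ih =>
    have hstep := PrefOp.bp_le_bp_apply_add (hval o List.mem_cons_self) π
    have hrest := ih (fun o' ho' => hval o' (List.mem_cons_of_mem o ho')) (o.apply π)
    rw [applySeq, List.countP_cons, List.length_cons]
    split_ifs at hstep ⊢ <;> omega

theorem sortRTT_adaptive_lower_bound_general
    (n : ℕ) (π : List ℕ)
    (ops : List PrefOp) (hval : ValidSeq n ops)
    (hsort : applySeq π ops = List.range (n + 2))
    (r : ℕ) (hr : ops.countP PrefOp.isRev = r) :
    bp π - 1 + r ≤ 2 * ops.length := by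
  have hbound := bp_add_countP_isRev_le hval π
  rw [hsort, bp_range, hr] at hbound
  have hbp_pos : 1 ≤ bp π := Nat.le_add_right 1 _
  omega

/-- adaptive lower bound: if a sequence of `ℓ` prefix
reversals / prefix transpositions / prefix transreversals sorts `π` and
exactly `r` of them are prefix reversals, then `2ℓ ≥ b(π) − 1 + r`. -/
theorem sortRTT_adaptive_lower_bound
    (n : ℕ) (π : List ℕ) (hπ : IsPerm n π)
    (ops : List PrefOp) (hval : ValidSeq n ops)
    (hsort : applySeq π ops = List.range (n + 2))
    (r : ℕ) (hr : ops.countP PrefOp.isRev = r) :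
    bp π - 1 + r ≤ 2 * ops.length :=
  sortRTT_adaptive_lower_bound_general n π ops hval hsort r hr
end
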